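/- Let n ≥ 1 and let a₀, a₁, a₂ ∈ ℤ[X_{n-1}]. If the periodic continued fraction [a₀, a₁, a₂, a₁, a₂, …] (i.e. the sequence c with c₀ = a₀, c_{2k+1} = a₁ and c_{2k+2} = a₂ for all k ≥ 0) converges to X_n, then a₂ = 2·a₀, (a₀·a₁ + 1)² − X_n²·a₁² = 1, and (a₀·a₁ + 1)·a₁ > 0. (Equivalently, ε = (a₀a₁+1) + X_n·a₁ lies in RE_n⁺ with q(ε) = a₁ dividing p(ε) − 1 = a₀a₁ and sgn(p(ε)q(ε)) = 1.) -/

import Mathlib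

/-- `X n = 2 cos(2π/2^(n+2))`. -/
noncomputable def X (n : ℕ) : ℝ := 2 * Real.cos (2 * Real.pi / 2 ^ (n + 2))

/-- Convergent numerators: `cfNum c (k+1) = p_k`, with `cfNum c 0 = p_{-1} = 1`. -/
noncomputable def cfNum (c : ℕ → ℝ) : ℕ → ℝ
  | 0 => 1
  | 1 => c 0
  | (k + 2) => c (k + 1) * cfNum c (k + 1) + cfNum c k

/-- Convergent denominators: `cfDen c (k+1) = q_k`, with `cfDen c 0 = q_{-1} = 0`. -/
noncomputable def cfDen (c : ℕ → ℝ) : ℕ → ℝ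
  | 0 => 0
  | 1 => 1
  | (k + 2) => c (k + 1) * cfDen c (k + 1) + cfDen c k

/-- The continued fraction `[c₀, c₁, c₂, …]` converges to `x`. -/
def CFConv (c : ℕ → ℝ) (x : ℝ) : Prop :=
  Filter.Tendsto (fun k => cfNum c (k + 1) / cfDen c (k + 1)) Filter.atTop (nhds x)

/-!
Put `x = X (m + 1)`. Its minimal polynomial over `ℚ` is Eisenstein at `2` of degree `2^(m+1)`,
twice the degree of `X m`, so `b * x = c` with `b, c ∈ ℤ[X m]` forces `b = 0`.

By the period two, `u j = p_{2j-1} - x q_{2j-1}` and `v j = q_{2j-1}` both satisfy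
`w (j+2) = t w (j+1) - w j` with `t = a₁a₂ + 2`, `u 0 = 1`, `v 0 = 0`, `v 1 = a₁`. As the
Casoratian of `u` and `v` is constant, `u j / v j → 0` forces `v j v (j+1) → ∞`. This excludes
`|t| < 2`, where the invariant quadratic form is definite, and for `|t| ≥ 2` it forces `u j = μ^j`
with `μ² - tμ + 1 = 0` and `|μ| ≤ 1`. Comparing the coefficients of `x` in this equation for
`μ = u 1 = (a₀a₁ + 1) - a₁x` gives `a₂ = 2a₀` and the norm equation; `|μ| ≤ 1` gives the sign.
-/

section Irrationality

open Polynomial IntermediateField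

noncomputable def cosPoly : ℕ → ℤ[X]
  | 0 => Polynomial.X
  | m + 1 => (cosPoly m).comp (Polynomial.X ^ 2 - C 2)

theorem natDegree_cosPoly (m : ℕ) : (cosPoly m).natDegree = 2 ^ m := by
  induction m with
  | zero => simp [cosPoly]
  | succ m ih => rw [cosPoly, natDegree_comp, ih, natDegree_X_pow_sub_C, pow_succ]

theorem monic_cosPoly (m : ℕ) : (cosPoly m).Monic := by
  induction m with
  | zero => exact monic_X
  | succ m ih =>
    exact ih.comp (monic_X_pow_sub_C 2 two_ne_zero) (by rw [natDegree_X_pow_sub_C]; norm_num)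

theorem map_cosPoly_zmod_two (m : ℕ) :
    (cosPoly m).map (Int.castRingHom (ZMod 2)) = Polynomial.X ^ 2 ^ m := by
  induction m with
  | zero => simp [cosPoly]
  | succ m ih =>
    have h2 : (C 2 : ℤ[X]).map (Int.castRingHom (ZMod 2)) = 0 := by
      rw [map_C, C_eq_zero]; rfl
    rw [cosPoly, map_comp, ih, Polynomial.map_sub, h2, sub_zero, Polynomial.map_pow, map_X,
      pow_comp, X_comp, ← pow_mul, pow_succ, mul_comm]

theorem eval_two_cosPoly (m : ℕ) : (cosPoly m).eval 2 = 2 := by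
  induction m with
  | zero => simp [cosPoly]
  | succ m ih => rw [cosPoly, eval_comp]; norm_num [ih]

theorem eval_neg_two_cosPoly (m : ℕ) :
    (cosPoly m).eval (-2) = -2 ∨ (cosPoly m).eval (-2) = 2 := by
  cases m with
  | zero => simp [cosPoly]
  | succ m => right; rw [cosPoly, eval_comp]; norm_num [eval_two_cosPoly]

theorem isEisensteinAt_cosPoly (m : ℕ) : (cosPoly (m + 1)).IsEisensteinAt (Ideal.span {2}) where
  leading := by simp [(monic_cosPoly _).leadingCoeff, Ideal.mem_span_singleton]
  mem {i} hi := by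
    rw [Ideal.mem_span_singleton, ← Nat.cast_two, ← ZMod.intCast_zmod_eq_zero_iff_dvd,
      ← eq_intCast (Int.castRingHom (ZMod 2)), ← coeff_map, map_cosPoly_zmod_two, coeff_X_pow,
      if_neg (natDegree_cosPoly _ ▸ hi.ne)]
  notMem := by
    rw [Ideal.span_singleton_pow, Ideal.mem_span_singleton, coeff_zero_eq_eval_zero, cosPoly,
      eval_comp]
    rcases eval_neg_two_cosPoly m with h | h <;> norm_num [h]

theorem irreducible_map_cosPoly (m : ℕ) : Irreducible ((cosPoly m).map (Int.castRingHom ℚ)) := by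
  cases m with
  | zero => simpa [cosPoly] using irreducible_X
  | succ m =>
    rw [← IsPrimitive.Int.irreducible_iff_irreducible_map_cast (monic_cosPoly _).isPrimitive]
    exact (isEisensteinAt_cosPoly m).irreducible
      ((Ideal.span_singleton_prime two_ne_zero).2 Int.prime_two) (monic_cosPoly _).isPrimitive
      (by rw [natDegree_cosPoly]; positivity)

theorem X_zero : X 0 = 0 := by
  rw [_root_.X, show 2 * Real.pi / 2 ^ (0 + 2) = Real.pi / 2 by ring, Real.cos_pi_div_two, mul_zero]

theorem X_succ_sq (m : ℕ) : X (m + 1) ^ 2 = 2 + X m := by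
  have h : 2 * Real.pi / 2 ^ (m + 2) = 2 * (2 * Real.pi / 2 ^ (m + 1 + 2)) := by ring
  rw [_root_.X, _root_.X, h, Real.cos_two_mul]
  ring

theorem X_pos {m : ℕ} (hm : 1 ≤ m) : 0 < X m := by
  have h8 : (8 : ℝ) ≤ 2 ^ (m + 2) := by
    calc (8 : ℝ) = 2 ^ 3 := by norm_num
      _ ≤ 2 ^ (m + 2) := pow_le_pow_right₀ (by norm_num) (by omega)
  have hlt : 2 * Real.pi / 2 ^ (m + 2) < Real.pi / 2 := by
    rw [div_lt_div_iff₀ (by positivity) two_pos]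
    nlinarith [Real.pi_pos]
  have hpos : 0 < 2 * Real.pi / 2 ^ (m + 2) := by positivity
  exact mul_pos two_pos (Real.cos_pos_of_mem_Ioo ⟨by linarith, hlt⟩)

theorem aeval_X_cosPoly (m : ℕ) : aeval (X m) (cosPoly m) = 0 := by
  induction m with
  | zero => simp [cosPoly, X_zero]
  | succ m ih =>
    rw [cosPoly, aeval_comp, map_sub, map_pow, aeval_X, aeval_C, X_succ_sq, algebraMap_int_eq,
      eq_intCast, Int.cast_two, add_sub_cancel_left, ih]

theorem minpoly_X (m : ℕ) : minpoly ℚ (X m) = (cosPoly m).map (Int.castRingHom ℚ) :=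
  (minpoly.eq_of_irreducible_of_monic (irreducible_map_cosPoly m)
    (by rw [← algebraMap_int_eq, aeval_map_algebraMap, aeval_X_cosPoly])
    ((monic_cosPoly m).map _)).symm

theorem isIntegral_X (m : ℕ) : IsIntegral ℚ (X m) :=
  IsIntegral.tower_top (R := ℤ) ⟨_, monic_cosPoly m, aeval_X_cosPoly m⟩

theorem finrank_adjoin_X (m : ℕ) : Module.finrank ℚ ℚ⟮X m⟯ = 2 ^ m := by
  rw [IntermediateField.adjoin.finrank (isIntegral_X m), minpoly_X,
    (monic_cosPoly m).natDegree_map, natDegree_cosPoly]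

theorem X_succ_notMem_adjoin (m : ℕ) : X (m + 1) ∉ ℚ⟮X m⟯ := by
  intro h
  have := IntermediateField.adjoin.finiteDimensional (isIntegral_X m)
  have hle := IntermediateField.finrank_le_of_le_right (IntermediateField.adjoin_simple_le_iff.2 h)
  rw [finrank_adjoin_X, finrank_adjoin_X, pow_succ] at hle
  have : 0 < 2 ^ m := by positivity
  omega

theorem eq_zero_of_mul_X_succ_mem_adjoin {m : ℕ} {b c : ℝ}
    (hb : b ∈ Algebra.adjoin ℤ {X m}) (hc : c ∈ Algebra.adjoin ℤ {X m}) (h : b * X (m + 1) = c) :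
    b = 0 := by
  have hle : Algebra.adjoin ℤ {X m} ≤ (ℚ⟮X m⟯.toSubalgebra.restrictScalars ℤ) :=
    Algebra.adjoin_le (by simp)
  by_contra hb0
  refine X_succ_notMem_adjoin m ?_
  rw [eq_div_of_mul_eq hb0 (by rw [mul_comm, h] : X (m + 1) * b = c)]
  exact div_mem (hle hc) (hle hb)

end Irrationality

open Filter Topology

theorem exists_root_abs_le_one {t : ℝ} (ht : 2 ≤ |t|) : ∃ μ : ℝ, μ ^ 2 - t * μ + 1 = 0 ∧ |μ| ≤ 1 := by
  have hd : 0 ≤ t ^ 2 - 4 := by nlinarith [sq_abs t, abs_nonneg t]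
  have hs := Real.sq_sqrt hd
  have hs0 := Real.sqrt_nonneg (t ^ 2 - 4)
  rcases le_abs'.1 ht with ht | ht
  · refine ⟨(t + √(t ^ 2 - 4)) / 2, by linear_combination hs / 4, abs_le.2 ⟨?_, ?_⟩⟩ <;>
      nlinarith
  · refine ⟨(t - √(t ^ 2 - 4)) / 2, by linear_combination hs / 4, abs_le.2 ⟨?_, ?_⟩⟩ <;>
      nlinarith

def IsChebyshevRec (t : ℝ) (u : ℕ → ℝ) : Prop :=
  ∀ j, u (j + 2) = t * u (j + 1) - u j

namespace IsChebyshevRec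

variable {t : ℝ} {u v w : ℕ → ℝ}

theorem eq_of_eq_of_eq (hu : IsChebyshevRec t u) (hw : IsChebyshevRec t w) (h0 : u 0 = w 0)
    (h1 : u 1 = w 1) (j : ℕ) : u j = w j := by
  have key : ∀ j, u j = w j ∧ u (j + 1) = w (j + 1) := by
    intro j
    induction j with
    | zero => exact ⟨h0, h1⟩
    | succ j ih => exact ⟨ih.2, by rw [hu, hw, ih.1, ih.2]⟩
  exact (key j).1

theorem casoratian_eq (hu : IsChebyshevRec t u) (hv : IsChebyshevRec t v) (j : ℕ) :
    u (j + 1) * v j - u j * v (j + 1) = u 1 * v 0 - u 0 * v 1 := by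
  induction j with
  | zero => rfl
  | succ j ih => rw [← ih, hu, hv]; ring

theorem quadForm_eq (hv : IsChebyshevRec t v) (j : ℕ) :
    v (j + 1) ^ 2 - t * v (j + 1) * v j + v j ^ 2 = v 1 ^ 2 - t * v 1 * v 0 + v 0 ^ 2 := by
  induction j with
  | zero => rfl
  | succ j ih => rw [← ih, hv]; ring

theorem tendsto_inv_mul_succ (hu : IsChebyshevRec t u) (hv : IsChebyshevRec t v)
    (hW : u 1 * v 0 - u 0 * v 1 ≠ 0) (hv_ne : ∀ᶠ j in atTop, v j ≠ 0) {L : ℝ}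
    (hL : Tendsto (fun j => u j / v j) atTop (𝓝 L)) :
    Tendsto (fun j => (v j * v (j + 1))⁻¹) atTop (𝓝 0) := by
  have hdiff : Tendsto (fun j => (u (j + 1) / v (j + 1) - u j / v j) / (u 1 * v 0 - u 0 * v 1))
      atTop (𝓝 0) := by
    simpa using ((tendsto_add_atTop_iff_nat 1).2 hL).sub hL |>.div_const _
  refine hdiff.congr' ?_
  filter_upwards [hv_ne, (tendsto_add_atTop_nat 1).eventually hv_ne] with j hj hj1
  rw [div_sub_div _ _ hj1 hj, mul_comm (v (j + 1)) (u j), casoratian_eq hu hv j,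
    mul_comm (v (j + 1))]
  field_simp

theorem two_le_abs (hv : IsChebyshevRec t v) (hv_ne : ∀ᶠ j in atTop, v j ≠ 0)
    (h : Tendsto (fun j => (v j * v (j + 1))⁻¹) atTop (𝓝 0)) : 2 ≤ |t| := by
  by_contra! ht
  obtain ⟨Q, hQ⟩ : ∃ Q, ∀ j, v (j + 1) ^ 2 - t * v (j + 1) * v j + v j ^ 2 = Q :=
    ⟨_, quadForm_eq hv⟩
  have hbound : ∀ j, (2 - |t|) * |v j * v (j + 1)| ≤ Q := fun j => by
    have hcross : t * v (j + 1) * v j ≤ |t| * |v j * v (j + 1)| := by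
      rw [← abs_mul, mul_comm (v j), ← mul_assoc]
      exact le_abs_self _
    have hamgm : 2 * |v j * v (j + 1)| ≤ v (j + 1) ^ 2 + v j ^ 2 := by
      rw [abs_mul, ← sq_abs (v j), ← sq_abs (v (j + 1))]
      nlinarith [sq_nonneg (|v j| - |v (j + 1)|)]
    linarith [hQ j]
  have hε : 0 < (2 - |t|) / (Q + 1) := by
    have := (hbound 0).trans' (by positivity : 0 ≤ (2 - |t|) * |v 0 * v (0 + 1)|)
    exact div_pos (by linarith) (by linarith)
  obtain ⟨j, hj, hj1, hsmall⟩ := (hv_ne.and (((tendsto_add_atTop_nat 1).eventually hv_ne).and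
    (NormedAddGroup.tendsto_nhds_zero.1 h _ hε))).exists
  rw [norm_inv, Real.norm_eq_abs, inv_lt_comm₀ (by positivity) hε, inv_div,
    div_lt_iff₀ (by linarith)] at hsmall
  linarith [hbound j]

theorem exists_eq_mul_of_tendsto_div_zero (hu : IsChebyshevRec t u) (hv : IsChebyshevRec t v)
    (hu0 : u 0 ≠ 0) (hv0 : v 0 = 0) (hv1 : v 1 ≠ 0) (hv_ne : ∀ᶠ j in atTop, v j ≠ 0)
    (h : Tendsto (fun j => u j / v j) atTop (𝓝 0)) :
    ∃ μ : ℝ, μ ^ 2 - t * μ + 1 = 0 ∧ |μ| ≤ 1 ∧ u 1 = μ * u 0 := by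
  have hinv := tendsto_inv_mul_succ hu hv (by simp [hv0, hu0, hv1]) hv_ne h
  obtain ⟨μ, hμ, hμ1⟩ := exists_root_abs_le_one (two_le_abs hv hv_ne hinv)
  set κ := (u 1 - μ * u 0) / v 1
  have hgeom : ∀ j, u j = u 0 * μ ^ j + κ * v j := by
    refine eq_of_eq_of_eq hu (fun j => ?_) (by simp [hv0]) ?_
    · linear_combination u 0 * μ ^ j * hμ + κ * hv j
    · simp only [κ]; field_simp; ring
  -- `(u j / v j - κ) * (u (j+1) / v (j+1) - κ)` tends to `κ²`, but it equals
  -- `u 0 ^ 2 * μ ^ (2j+1) / (v j * v (j+1))`, which tends to `0`.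
  have hprod : Tendsto (fun j => (u j / v j - κ) * (u (j + 1) / v (j + 1) - κ)) atTop
      (𝓝 ((0 - κ) * (0 - κ))) :=
    (h.sub_const κ).mul (((tendsto_add_atTop_iff_nat 1).2 h).sub_const κ)
  have hsmall : Tendsto (fun j => u 0 ^ 2 * μ ^ (2 * j + 1) * (v j * v (j + 1))⁻¹) atTop
      (𝓝 0) := by
    refine squeeze_zero_norm (a := fun j => u 0 ^ 2 * ‖(v j * v (j + 1))⁻¹‖) (fun j => ?_)
      (by simpa using hinv.norm.const_mul (u 0 ^ 2))
    calc _ = u 0 ^ 2 * ‖(v j * v (j + 1))⁻¹‖ * |μ| ^ (2 * j + 1) := by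
          simp only [norm_mul, norm_pow, Real.norm_eq_abs, sq_abs]; ring
      _ ≤ _ := mul_le_of_le_one_right (by positivity) (pow_le_one₀ (abs_nonneg μ) hμ1)
  have hκ : (0 - κ) * (0 - κ) = 0 := by
    refine tendsto_nhds_unique (hprod.congr' ?_) hsmall
    filter_upwards [hv_ne, (tendsto_add_atTop_nat 1).eventually hv_ne] with j hj hj1
    rw [hgeom j, hgeom (j + 1)]
    field_simp
    ring
  refine ⟨μ, hμ, hμ1, ?_⟩
  simpa [show κ = 0 by simpa using hκ, mul_comm] using hgeom 1

end IsChebyshevRec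

theorem add_four_eq_of_cf_rec {c w : ℕ → ℝ} (hw : ∀ k, w (k + 2) = c (k + 1) * w (k + 1) + w k)
    {k : ℕ} (hc : c (k + 3) = c (k + 1)) :
    w (k + 4) = (c (k + 2) * c (k + 1) + 2) * w (k + 2) - w k := by
  linear_combination hw (k + 2) + hc * w (k + 3) + c (k + 1) * hw (k + 1) - hw k

namespace CFConv

variable {c : ℕ → ℝ} {x : ℝ}

theorem tendsto_div (h : CFConv c x) : Tendsto (fun k => cfNum c k / cfDen c k) atTop (𝓝 x) :=
  (tendsto_add_atTop_iff_nat 1).1 h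

theorem eventually_cfDen_ne_zero (h : CFConv c x) (hx : x ≠ 0) :
    ∀ᶠ k in atTop, cfDen c k ≠ 0 :=
  (h.tendsto_div.eventually_ne hx).mono fun k hk hD => by simp [hD] at hk

theorem tendsto_sub_mul_div_cfDen (h : CFConv c x) (hx : x ≠ 0) :
    Tendsto (fun k => (cfNum c k - x * cfDen c k) / cfDen c k) atTop (𝓝 0) := by
  have hsub := h.tendsto_div.sub_const x
  rw [sub_self] at hsub
  refine hsub.congr' ?_
  filter_upwards [h.eventually_cfDen_ne_zero hx] with k hk
  field_simp

theorem root_of_period_two {a₀ a₁ a₂ : ℝ} (h : CFConv c x) (hx : x ≠ 0) (hc0 : c 0 = a₀)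
    (hcodd : ∀ k, c (2 * k + 1) = a₁) (hceven : ∀ k, c (2 * k + 2) = a₂) :
    a₁ ≠ 0 ∧ (a₀ * a₁ + 1 - x * a₁) ^ 2 - (a₂ * a₁ + 2) * (a₀ * a₁ + 1 - x * a₁) + 1 = 0 ∧
      |a₀ * a₁ + 1 - x * a₁| ≤ 1 := by
  have hc1 : c 1 = a₁ := hcodd 0
  have heven : ∀ w : ℕ → ℝ, (∀ k, w (k + 2) = c (k + 1) * w (k + 1) + w k) →
      IsChebyshevRec (a₂ * a₁ + 2) (fun j => w (2 * j)) := fun w hw j => by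
    have := add_four_eq_of_cf_rec hw (k := 2 * j) ((hcodd (j + 1)).trans (hcodd j).symm)
    rwa [hceven, hcodd] at this
  have hv := heven (cfDen c) fun k => rfl
  have hu := heven (fun k => cfNum c k - x * cfDen c k) fun k => by
    simp only [cfNum, cfDen]; ring
  have h2j : Tendsto (fun j : ℕ => 2 * j) atTop atTop := tendsto_id.const_mul_atTop' two_pos
  have hv_ne := h2j.eventually (h.eventually_cfDen_ne_zero hx)
  have ha₁ : a₁ ≠ 0 := by
    intro ha₁
    have hzero := hv.eq_of_eq_of_eq (w := 0) (fun j => by simp) rfl (by simp [cfDen, hc1, ha₁])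
    obtain ⟨j, hj⟩ := hv_ne.exists
    exact hj (hzero j)
  obtain ⟨μ, hμ, hμ1, hu1⟩ := hu.exists_eq_mul_of_tendsto_div_zero hv (by simp [cfNum, cfDen])
    rfl (by simpa [cfDen, hc1] using ha₁) hv_ne ((h.tendsto_sub_mul_div_cfDen hx).comp h2j)
  have he : a₀ * a₁ + 1 - x * a₁ = μ := by
    simpa [cfNum, cfDen, hc0, hc1, mul_comm] using hu1
  exact ⟨ha₁, he ▸ hμ, he ▸ hμ1⟩

end CFConv

theorem mul_pos_of_sq_sub_sq_mul_sq_eq_one {p q x : ℝ} (hx : 0 < x) (hq : q ≠ 0)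
    (h : p ^ 2 - x ^ 2 * q ^ 2 = 1) (habs : |p - x * q| ≤ 1) : 0 < p * q := by
  have hprod : (p - x * q) * (p + x * q) = 1 := by linear_combination h
  have hsq : (p - x * q) ^ 2 ≤ 1 := by nlinarith [sq_abs (p - x * q), abs_nonneg (p - x * q)]
  have hxq : x * q ≠ 0 := mul_ne_zero hx.ne' hq
  have : (p - x * q) ^ 2 < (p + x * q) ^ 2 := by
    nlinarith [sq_nonneg (p - x * q - (p + x * q)), sq_pos_of_ne_zero hxq]
  nlinarith

theorem stmt3 (n : ℕ) (hn : 1 ≤ n) (a₀ a₁ a₂ : ℝ)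
    (ha₀ : a₀ ∈ Algebra.adjoin ℤ ({X (n - 1)} : Set ℝ))
    (ha₁ : a₁ ∈ Algebra.adjoin ℤ ({X (n - 1)} : Set ℝ))
    (ha₂ : a₂ ∈ Algebra.adjoin ℤ ({X (n - 1)} : Set ℝ))
    (c : ℕ → ℝ) (hc0 : c 0 = a₀)
    (hcodd : ∀ k, c (2 * k + 1) = a₁) (hceven : ∀ k, c (2 * k + 2) = a₂)
    (hconv : CFConv c (X n)) :
    a₂ = 2 * a₀ ∧ (a₀ * a₁ + 1) ^ 2 - X n ^ 2 * a₁ ^ 2 = 1 ∧ (a₀ * a₁ + 1) * a₁ > 0 := by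
  obtain ⟨m, rfl⟩ : ∃ m, n = m + 1 := ⟨n - 1, by omega⟩
  rw [Nat.add_sub_cancel] at ha₀ ha₁ ha₂
  have hx := X_pos hn
  obtain ⟨ha₁0, hroot, habs⟩ := hconv.root_of_period_two hx.ne' hc0 hcodd hceven
  have hsplit : a₁ ^ 2 * (2 * a₀ - a₂) * X (m + 1) =
      (a₀ * a₁ + 1) ^ 2 + (2 + X m) * a₁ ^ 2 - (a₂ * a₁ + 2) * (a₀ * a₁ + 1) + 1 := by
    linear_combination -hroot + a₁ ^ 2 * X_succ_sq m
  have ha₂eq : a₂ = 2 * a₀ := by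
    have := eq_zero_of_mul_X_succ_mem_adjoin (by aesop) (by aesop) hsplit
    simp only [mul_eq_zero, pow_eq_zero_iff two_ne_zero, ha₁0, false_or] at this
    linarith
  have hnorm : (a₀ * a₁ + 1) ^ 2 - X (m + 1) ^ 2 * a₁ ^ 2 = 1 := by
    rw [ha₂eq] at hroot
    linear_combination -hroot
  exact ⟨ha₂eq, hnorm, mul_pos_of_sq_sub_sq_mul_sq_eq_one hx ha₁0 hnorm habs⟩
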